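/- Let p ≥ 3, q ≥ 2. For regular λ ∈ ℤ + (p+q)/2 and regular μ ∈ ℤ + (p+q-1)/2, the following are equivalent: (i) μ = λ + n + 1/2 for some n ∈ ℕ; (ii) the interlacing property μ > λ > (p+q-4)/2 > (p+q-6)/2 > ⋯ > κ(p+q) holds, where κ(m) = 0 if m is even and 1/2 if m is odd. -/

import Mathlib

/-!
The sequence `λ, (p+q-4)/2, (p+q-6)/2, …` is always strictly decreasing: the tail steps down
by `1`, and regularity puts `λ` above its head. So interlacing reduces to `μ > λ`, and since
`μ - λ ∈ ℤ + 1/2`, this says exactly `μ - λ ∈ ℕ + 1/2`.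
-/

namespace List

theorem isChain_gt_map_range {α : Type*} [Preorder α] {f : ℕ → α} (hf : StrictAnti f)
    (N : ℕ) : IsChain (· > ·) ((range N).map f) :=
  (pairwise_map.2 (pairwise_lt_range.imp fun hij => hf hij)).isChain

theorem isChain_gt_cons_map_range {α : Type*} [Preorder α] {f : ℕ → α} (hf : StrictAnti f)
    {a : α} (ha : f 0 < a) (N : ℕ) : IsChain (· > ·) (a :: (range N).map f) := by
  refine isChain_cons.2 ⟨?_, isChain_gt_map_range hf N⟩
  intro y hy
  cases N with
  | zero => simp at hy
  | succ N =>
    rw [range_succ_eq_map, map_cons, head?_cons, Option.mem_some_iff] at hy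
    exact hy ▸ ha

end List

theorem exists_nat_eq_add_add_half_iff_lt {a b : ℝ} {k : ℤ} (h : b = a + k + 1 / 2) :
    (∃ n : ℕ, b = a + n + 1 / 2) ↔ a < b := by
  constructor
  · rintro ⟨n, rfl⟩
    linarith [n.cast_nonneg (α := ℝ)]
  · intro hab
    have hk : 0 ≤ k := by
      have : (-1 : ℝ) < k := by linarith
      exact_mod_cast this
    exact ⟨k.toNat, by rw [h, ← Int.cast_natCast, Int.toNat_of_nonneg hk]⟩

theorem stmt12_general (p q : ℕ) (lam mu : ℝ)
    (hlam : ∃ k : ℤ, lam = k + ((p : ℝ) + q) / 2)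
    (hlamreg : ((p : ℝ) + q - 2) / 2 ≤ lam)
    (hmu : ∃ k : ℤ, mu = k + ((p : ℝ) + q - 1) / 2)
    (tail : List ℝ)
    (htail : tail = (List.range ((p + q - 2) / 2)).map
      (fun i => ((p : ℝ) + q - 4) / 2 - i)) :
    (∃ n : ℕ, mu = lam + n + 1 / 2) ↔
      List.Chain' (· > ·) (mu :: lam :: tail) := by
  obtain ⟨a, ha⟩ := hlam
  obtain ⟨b, hb⟩ := hmu
  have hdiff : mu = lam + (b - a - 1 : ℤ) + 1 / 2 := by rw [ha, hb]; push_cast; ring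
  have htail_chain : List.IsChain (· > ·) (lam :: tail) := by
    -- the coercion `List ℕ → List ℝ` in `htail` elaborates to `do let a ← l; pure ↑a`
    rw [htail, bind_pure_comp, List.map_eq_map, List.map_map]
    refine List.isChain_gt_cons_map_range (fun i j hij => ?_) ?_ _
    · simpa using hij
    · simp only [Function.comp_apply, Nat.cast_zero, sub_zero]
      linarith
  exact (exists_nat_eq_add_add_half_iff_lt hdiff).trans
    (List.isChain_cons_cons.trans (and_iff_left htail_chain)).symm

/-- Discretely decomposable branching, Version 2: for regular `λ` and `μ`,
`μ = λ + n + 1/2` for some `n ∈ ℕ` iff the interlacing property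
`μ > λ > (p+q-4)/2 > (p+q-6)/2 > ⋯ > κ(p+q)` holds. -/
theorem stmt12 (p q : ℕ) (hp : 3 ≤ p) (hq : 2 ≤ q) (lam mu : ℝ)
    (hlam : ∃ k : ℤ, lam = k + ((p : ℝ) + q) / 2)
    (hlamreg : ((p : ℝ) + q - 2) / 2 ≤ lam)
    (hmu : ∃ k : ℤ, mu = k + ((p : ℝ) + q - 1) / 2)
    (hmureg : ((p : ℝ) + q - 3) / 2 ≤ mu)
    (tail : List ℝ)
    (htail : tail = (List.range ((p + q - 2) / 2)).map
      (fun i => ((p : ℝ) + q - 4) / 2 - i)) :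
    (∃ n : ℕ, mu = lam + n + 1 / 2) ↔
      List.Chain' (· > ·) (mu :: lam :: tail) :=
  stmt12_general p q lam mu hlam hlamreg hmu tail htail
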